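/- Let n = n_0 + n_1 + ... + n_r be a composition of n with n_0 ≥ 0 and n_i > 0 for i ≥ 1, and let x : Fin n → ℕ be the 'block-constant' function taking the value t on the t-th block (so x takes the value t on exactly n_t indices, for t = 0,1,...,r). Consider the set of signed pairs R = {ε·e_i + δ·e_j : 1 ≤ i < j ≤ n, ε, δ ∈ {+1,−1}}, where a signed pair α = ε·e_i + δ·e_j evaluates on x as α(x) = ε·x(i) + δ·x(j). Then the number of elements α ∈ R with α(x) > 0 equals Σ_{t=1}^{r} C(n_t, 2) + 2·Σ_{0 ≤ s < t ≤ r} n_s·n_t. -/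

import Mathlib

/-!
For `a, b ≥ 0` the number of signs `(ε, δ)` with `ε a + δ b > 0` is `2` if `a ≠ b`, `1` if
`a = b > 0` and `0` if `a = b = 0`. This weight is symmetric, so twice the sum over `i < j` is
the full double sum minus the diagonal. Grouping indices by the block they lie in turns the full
double sum into a double sum over blocks weighted by `n_s n_t`, which the same symmetrization
evaluates through `n_s n_t` for `s < t` and `n_t ^ 2 = n_t + 2 C(n_t, 2)` on the diagonal.
-/

open Finset

def positiveSignCount (a b : ℕ) : ℕ :=
  #{s : Bool × Bool |
    0 < (if s.1 then (1 : ℤ) else -1) * a + (if s.2 then (1 : ℤ) else -1) * b}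

lemma positiveSignCount_comm (a b : ℕ) : positiveSignCount a b = positiveSignCount b a :=
  card_equiv (Equiv.prodComm Bool Bool) (by simp [add_comm])

lemma positiveSignCount_self (a : ℕ) :
    positiveSignCount a a = if a = 0 then 0 else 1 := by
  simp only [positiveSignCount, card_filter, Fintype.sum_prod_type, Fintype.sum_bool, ite_true,
    Bool.false_eq_true, ite_false, one_mul, neg_one_mul]
  split_ifs <;> omega

lemma positiveSignCount_of_ne {a b : ℕ} (h : a ≠ b) : positiveSignCount a b = 2 := by
  simp only [positiveSignCount, card_filter, Fintype.sum_prod_type, Fintype.sum_bool, ite_true,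
    Bool.false_eq_true, ite_false, one_mul, neg_one_mul]
  split_ifs <;> omega

lemma card_filter_lt_and_pos_eq_sum_positiveSignCount {ι : Type*} [Fintype ι] [LT ι]
    [DecidableLT ι] (f : ι → ℕ) :
    #{p : ι × ι × Bool × Bool | p.1 < p.2.1 ∧
        0 < (if p.2.2.1 then (1 : ℤ) else -1) * f p.1 +
          (if p.2.2.2 then (1 : ℤ) else -1) * f p.2.1}
      = ∑ i, ∑ j, if i < j then positiveSignCount (f i) (f j) else 0 := by
  simp only [card_filter, Fintype.sum_prod_type, positiveSignCount]
  refine sum_congr rfl fun i _ => sum_congr rfl fun j _ => ?_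
  split_ifs with h <;> simp [h]

lemma sum_sum_eq_two_nsmul_sum_sum_lt_add_sum {α M : Type*} [Fintype α] [LinearOrder α]
    [AddCommMonoid M] (G : α → α → M) (hG : ∀ a b, G a b = G b a) :
    ∑ a, ∑ b, G a b = 2 • ∑ a, ∑ b, (if a < b then G a b else 0) + ∑ a, G a a := by
  have trichotomy : ∀ a b, G a b = (if a < b then G a b else 0) + (if b < a then G b a else 0)
      + (if a = b then G a b else 0) := by
    intro a b
    rcases lt_trichotomy a b with h | rfl | h
    · simp [h, h.ne, h.not_gt]
    · simp
    · simp [h, h.ne', h.not_gt, hG a b]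
  rw [sum_congr rfl fun a _ => sum_congr rfl fun b _ => trichotomy a b]
  simp only [sum_add_distrib, sum_ite_eq, mem_univ, if_true]
  rw [sum_comm (f := fun a b => if b < a then G b a else 0), two_nsmul]

lemma sum_comp_eq_sum_card_nsmul {ι M : Type*} [Fintype ι] [AddCommMonoid M] {r : ℕ}
    {x : ι → ℕ} (hx : ∀ i, x i ≤ r) (h : ℕ → M) :
    ∑ i, h (x i) = ∑ t : Fin (r + 1), #{i | x i = t} • h t := by
  rw [← sum_fiberwise_of_maps_to (g := x) (t := range (r + 1))
    (fun i _ => mem_range.2 (Nat.lt_succ_of_le (hx i))), ← Fin.sum_univ_eq_sum_range]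
  refine sum_congr rfl fun t _ => ?_
  rw [← sum_const]
  exact sum_congr rfl fun i hi => by rw [(mem_filter.1 hi).2]

lemma le_of_sum_card_fiber_eq_card {ι : Type*} [Fintype ι] {r : ℕ} {x : ι → ℕ}
    (hx : ∑ t : Fin (r + 1), #{i | x i = t} = Fintype.card ι) (i : ι) : x i ≤ r := by
  have hcard : #{i | x i ≤ r} = Fintype.card ι := by
    rw [card_eq_sum_card_fiberwise (f := x) (t := range (r + 1))
      (fun i hi => mem_range.2 (Nat.lt_succ_of_le (mem_filter.1 hi).2)), ← hx,
      ← Fin.sum_univ_eq_sum_range]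
    refine sum_congr rfl fun t _ => ?_
    rw [filter_filter]
    congr 1
    ext i
    simp only [mem_filter, mem_univ, true_and]
    omega
  have hi : i ∈ ({j | x j ≤ r} : Finset ι) := by
    rw [eq_univ_of_card _ hcard]
    exact mem_univ i
  exact (mem_filter.1 hi).2

lemma mul_self_eq_add_two_mul_choose_two (m : ℕ) : m * m = m + 2 * m.choose 2 := by
  rw [Nat.choose_two_right, Nat.mul_div_cancel' (Nat.even_mul_pred_self m).two_dvd,
    Nat.mul_sub_one, Nat.add_sub_cancel' (Nat.le_mul_self m)]

lemma sum_sum_ite_lt_mul_positiveSignCount {r : ℕ} (n : Fin (r + 1) → ℕ) :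
    ∑ s : Fin (r + 1), ∑ t : Fin (r + 1),
        (if s < t then n s * n t * positiveSignCount s t else 0)
      = 2 * ∑ q ∈ {q : Fin (r + 1) × Fin (r + 1) | q.1 < q.2}, n q.1 * n q.2 := by
  rw [sum_filter, Fintype.sum_prod_type, mul_sum]
  refine sum_congr rfl fun s _ => ?_
  rw [mul_sum]
  refine sum_congr rfl fun t _ => ?_
  split_ifs with h
  · rw [positiveSignCount_of_ne (Fin.val_injective.ne h.ne)]
    ring
  · rfl

lemma sum_mul_self_mul_positiveSignCount {r : ℕ} (n : Fin (r + 1) → ℕ) :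
    ∑ t : Fin (r + 1), n t * n t * positiveSignCount t t
      = ∑ t : Fin (r + 1), n t * positiveSignCount t t
        + 2 * ∑ t ∈ {t : Fin (r + 1) | t ≠ 0}, (n t).choose 2 := by
  rw [sum_filter, mul_sum, ← sum_add_distrib]
  refine sum_congr rfl fun t _ => ?_
  rw [positiveSignCount_self, mul_self_eq_add_two_mul_choose_two]
  by_cases ht : t = 0
  · simp [ht]
  · simp [ht, Fin.val_eq_zero_iff]

theorem sum_sum_ite_lt_positiveSignCount_eq {ι : Type*} [Fintype ι] [LinearOrder ι] {r : ℕ}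
    {x : ι → ℕ} (hx : ∀ i, x i ≤ r) {n : Fin (r + 1) → ℕ}
    (hn : ∀ t : Fin (r + 1), #{i | x i = t} = n t) :
    ∑ i, ∑ j, (if i < j then positiveSignCount (x i) (x j) else 0)
      = ∑ t ∈ {t : Fin (r + 1) | t ≠ 0}, (n t).choose 2
        + 2 * ∑ q ∈ {q : Fin (r + 1) × Fin (r + 1) | q.1 < q.2}, n q.1 * n q.2 := by
  have fibers (h : ℕ → ℕ) : ∑ i, h (x i) = ∑ t : Fin (r + 1), n t * h t := by
    simp only [sum_comp_eq_sum_card_nsmul hx, hn, smul_eq_mul]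
  have total : ∑ i, ∑ j, positiveSignCount (x i) (x j)
      = ∑ s : Fin (r + 1), ∑ t : Fin (r + 1), n s * n t * positiveSignCount s t := by
    rw [sum_congr rfl fun i _ => fibers (positiveSignCount (x i)),
      fibers fun a => ∑ t, n t * positiveSignCount a t]
    simp only [mul_sum, mul_assoc]
  have fine := sum_sum_eq_two_nsmul_sum_sum_lt_add_sum (fun i j => positiveSignCount (x i) (x j))
    fun i j => positiveSignCount_comm _ _
  have coarse := sum_sum_eq_two_nsmul_sum_sum_lt_add_sum
    (fun s t : Fin (r + 1) => n s * n t * positiveSignCount s t)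
    fun s t => by simp only [positiveSignCount_comm s]; ring
  rw [fibers fun a => positiveSignCount a a, total, coarse, sum_sum_ite_lt_mul_positiveSignCount,
    sum_mul_self_mul_positiveSignCount, smul_eq_mul, smul_eq_mul] at fine
  omega

theorem signed_pair_count_of_composition_general
    (r : ℕ) (n : Fin (r + 1) → ℕ)
    (N : ℕ) (hN : N = ∑ t, n t)
    (x : Fin N → ℕ)
    (hx : ∀ t : Fin (r + 1), (Finset.univ.filter fun i : Fin N => x i = (t : ℕ)).card = n t) :
    ((Finset.univ : Finset (Fin N × Fin N × Bool × Bool)).filter fun p =>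
        p.1 < p.2.1 ∧
          0 < (if p.2.2.1 then (1 : ℤ) else -1) * (x p.1 : ℤ) +
              (if p.2.2.2 then (1 : ℤ) else -1) * (x p.2.1 : ℤ)).card
      = (∑ t ∈ Finset.univ.filter (fun t : Fin (r + 1) => t ≠ 0), Nat.choose (n t) 2)
        + 2 * ∑ q ∈ Finset.univ.filter
            (fun q : Fin (r + 1) × Fin (r + 1) => q.1 < q.2), n q.1 * n q.2 := by
  have x_le : ∀ i, x i ≤ r :=
    le_of_sum_card_fiber_eq_card (by simp only [hx, Fintype.card_fin, hN])
  rw [card_filter_lt_and_pos_eq_sum_positiveSignCount]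
  exact sum_sum_ite_lt_positiveSignCount_eq x_le hx

/-- Counting the signed pairs `ε·e_i + δ·e_j` (i < j, ε, δ ∈ {±1}) that are positive on the
block-constant function `x` attached to a composition `n = n_0 + n_1 + ... + n_r`
(with `n_0 ≥ 0`, `n_t > 0` for `t ≥ 1`):
the count is `Σ_{t=1}^r C(n_t, 2) + 2 Σ_{0 ≤ s < t ≤ r} n_s n_t`. -/
theorem signed_pair_count_of_composition
    (r : ℕ) (n : Fin (r + 1) → ℕ) (hn : ∀ t : Fin (r + 1), t ≠ 0 → 0 < n t)
    (N : ℕ) (hN : N = ∑ t, n t)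
    (x : Fin N → ℕ)
    (hx : ∀ t : Fin (r + 1), (Finset.univ.filter fun i : Fin N => x i = (t : ℕ)).card = n t) :
    ((Finset.univ : Finset (Fin N × Fin N × Bool × Bool)).filter fun p =>
        p.1 < p.2.1 ∧
          0 < (if p.2.2.1 then (1 : ℤ) else -1) * (x p.1 : ℤ) +
              (if p.2.2.2 then (1 : ℤ) else -1) * (x p.2.1 : ℤ)).card
      = (∑ t ∈ Finset.univ.filter (fun t : Fin (r + 1) => t ≠ 0), Nat.choose (n t) 2)
        + 2 * ∑ q ∈ Finset.univ.filter
            (fun q : Fin (r + 1) × Fin (r + 1) => q.1 < q.2), n q.1 * n q.2 :=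
  signed_pair_count_of_composition_general r n N hN x hx
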